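/- arXiv:2002.08474 — 6 statements merged into one kernel-verified Lean document; each statement's English description precedes it below -/
import Mathlib

section
/- For every positive integer n and every c ∈ (0,1], the quantity (1 - (1 - c/n)^n)/c is at least 1 - 1/e. -/
/-- For every `n ≥ 1` and `c ∈ (0,1]`, `(1 - (1 - c/n)^n)/c ≥ 1 - 1/e`. -/
theorem stmt_3 (n : ℕ) (hn : 1 ≤ n) (c : ℝ) (hc0 : 0 < c) (hc1 : c ≤ 1) :
    1 - 1 / Real.exp 1 ≤ (1 - (1 - c / n) ^ n) / c := by
  have hn' : (1:ℝ) ≤ n := by exact_mod_cast hn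
  have hnpos : (0:ℝ) < n := by linarith
  have hcn : c / n ≤ 1 := by rw [div_le_one hnpos]; linarith
  have hcn0 : 0 < c / n := div_pos hc0 hnpos
  have h1 : (1 - c / n) ^ n ≤ Real.exp (-c) := by
    have hb : 0 ≤ 1 - c / n := by linarith
    have hle : 1 - c / n ≤ Real.exp (-(c / n)) := by
      have := Real.add_one_le_exp (-(c / n)); linarith
    calc (1 - c / n) ^ n ≤ (Real.exp (-(c / n))) ^ n := pow_le_pow_left₀ hb hle n
      _ = Real.exp (-c) := by
          rw [← Real.exp_nat_mul]; congr 1; field_simp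
  have h2 : Real.exp (-c) ≤ (1 - c) * 1 + c * Real.exp (-1) := by
    have := convexOn_exp.2 (Set.mem_univ (0:ℝ)) (Set.mem_univ (-1:ℝ))
      (by linarith : (0:ℝ) ≤ 1 - c) hc0.le (by ring)
    simpa using this
  have he : Real.exp (-1) = 1 / Real.exp 1 := by
    rw [Real.exp_neg]; ring
  rw [le_div_iff₀ hc0]
  rw [he] at h2
  nlinarith [Real.exp_pos (1:ℝ)]
end

section
/- Let y_1, ..., y_n ∈ [0,1] with Σ_{v=1}^n y_v ≤ 1. Then 1 - Π_{v=1}^n (1 - y_v) ≥ (1 - 1/e) · Σ_{v=1}^n y_v. -/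
open Finset

/-- If `y_v ∈ [0,1]` and `Σ y_v ≤ 1`, then `1 - ∏ (1 - y_v) ≥ (1 - 1/e) Σ y_v`. -/
theorem stmt_6 (n : ℕ) (hn : 0 < n) (y : Fin n → ℝ)
    (hy : ∀ v, y v ∈ Set.Icc (0:ℝ) 1) (hsum : ∑ v : Fin n, y v ≤ 1) :
    (1 - 1 / Real.exp 1) * ∑ v : Fin n, y v ≤ 1 - ∏ v : Fin n, (1 - y v) := by
  set S := ∑ v : Fin n, y v with hS
  have hS0 : 0 ≤ S := Finset.sum_nonneg fun v _ => (hy v).1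
  -- product bound: ∏ (1 - y v) ≤ exp (-S)
  have hprod : ∏ v : Fin n, (1 - y v) ≤ Real.exp (-S) := by
    have h1 : ∏ v : Fin n, (1 - y v) ≤ ∏ v : Fin n, Real.exp (-(y v)) := by
      apply Finset.prod_le_prod
      · intro i _; linarith [(hy i).2]
      · intro i _
        have := Real.add_one_le_exp (-(y i))
        linarith
    have h2 : ∏ v : Fin n, Real.exp (-(y v)) = Real.exp (-S) := by
      rw [← Real.exp_sum, hS, ← Finset.sum_neg_distrib]
    linarith [h1, h2.le]
  -- convexity bound: exp (-S) ≤ 1 - (1 - 1/e) S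
  have hconv : Real.exp (-S) ≤ 1 - (1 - 1 / Real.exp 1) * S := by
    have := convexOn_exp.2 (Set.mem_univ (-1 : ℝ)) (Set.mem_univ (0 : ℝ))
      hS0 (by linarith : (0:ℝ) ≤ 1 - S) (by ring)
    simp only [smul_eq_mul, mul_zero, mul_neg, mul_one, add_zero, Real.exp_zero] at this

    have h1 : Real.exp (-1) = 1 / Real.exp 1 := by
      rw [Real.exp_neg]; ring
    rw [h1] at this; nlinarith [this]
  nlinarith [hprod, hconv]
end

section
/- Suppose nonnegative reals a_1, ..., a_{t-1} satisfy, for every t' ∈ [1, t-1], Σ_{τ=1}^{t'} a_τ (1 - G(t' - τ)) ≤ 1, where G is the CDF of a distribution on positive integers with minimum discrete hazard rate q. Then Σ_{τ=1}^{t-1} a_τ (1 - G(t - τ)) ≤ 1 - q. -/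
open Finset

/-- If nonnegative reals `a_1,…,a_{t-1}` satisfy, for every `t' ∈ [1, t-1]`,
`Σ_{τ=1}^{t'} a_τ (1 - G(t'-τ)) ≤ 1`, where `G` is the CDF of a distribution on the
positive integers with minimum discrete hazard rate `q`, then
`Σ_{τ=1}^{t-1} a_τ (1 - G(t-τ)) ≤ 1 - q`. -/
theorem stmt_9 (g : ℕ → ℝ) (hg0 : g 0 = 0) (hgpos : ∀ τ, 0 ≤ g τ)
    (hgsum : ∑' τ : ℕ, g τ = 1)
    (G : ℕ → ℝ) (hG : ∀ t, G t = ∑ k ∈ Finset.range (t + 1), g k)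
    (q : ℝ) (hq0 : 0 ≤ q) (hq1 : q ≤ 1)
    (hhaz : ∀ τ : ℕ, 1 ≤ τ → q * (1 - G (τ - 1)) ≤ g τ)
    (t : ℕ) (ht : 2 ≤ t) (a : ℕ → ℝ) (ha : ∀ τ, 0 ≤ a τ)
    (hfeas : ∀ t' ∈ Finset.Icc 1 (t - 1),
      ∑ τ ∈ Finset.Icc 1 t', a τ * (1 - G (t' - τ)) ≤ 1) :
    ∑ τ ∈ Finset.Icc 1 (t - 1), a τ * (1 - G (t - τ)) ≤ 1 - q := by
  have h1q : 0 ≤ 1 - q := by linarith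
  have key : ∑ τ ∈ Finset.Icc 1 (t - 1), a τ * (1 - G (t - τ)) ≤
      (1 - q) * ∑ τ ∈ Finset.Icc 1 (t - 1), a τ * (1 - G (t - 1 - τ)) := by
    rw [Finset.mul_sum]
    apply Finset.sum_le_sum
    intro τ hτ
    simp only [Finset.mem_Icc] at hτ
    obtain ⟨h1, h2⟩ := hτ
    have htτ : 1 ≤ t - τ := by omega
    have hGsplit : G (t - τ) = G (t - τ - 1) + g (t - τ) := by
      rw [hG, hG]
      have : t - τ + 1 = (t - τ - 1 + 1) + 1 := by omega
      rw [this, Finset.sum_range_succ]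
      congr 2
      omega
    have hhz := hhaz (t - τ) htτ
    have heq : t - 1 - τ = t - τ - 1 := by omega
    rw [heq, mul_comm (1 - q), mul_assoc]
    apply mul_le_mul_of_nonneg_left _ (ha τ)
    rw [hGsplit]
    nlinarith [hhz]
  have hfs := hfeas (t - 1) (by simp [Finset.mem_Icc]; omega)
  calc ∑ τ ∈ Finset.Icc 1 (t - 1), a τ * (1 - G (t - τ))
      ≤ (1 - q) * ∑ τ ∈ Finset.Icc 1 (t - 1), a τ * (1 - G (t - 1 - τ)) := key
    _ ≤ (1 - q) * 1 := mul_le_mul_of_nonneg_left hfs h1q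
    _ = 1 - q := mul_one _
end

section
/- For q ∈ (0,1), the function κ(q) = min{ 1/(2-q), 1 + q - q(1-q)(1 - 1/e)/((1+q) log(1/(1-q))) } satisfies κ(q) < 1 for all q ∈ (0,1), and 1/(2-q) · (1 - 1/e) ≤ κ(q). -/
/-- For `q ∈ (0,1)`, the upper bound
`κ(q) = min{1/(2-q), 1 + q - q(1-q)(1-1/e)/((1+q)log(1/(1-q)))}` satisfies
`κ(q) < 1` and `(1/(2-q))(1-1/e) ≤ κ(q)`. -/
theorem stmt_11 (q : ℝ) (hq : q ∈ Set.Ioo (0:ℝ) 1) :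
    min (1 / (2 - q))
        (1 + q - q * (1 - q) * (1 - 1 / Real.exp 1) / ((1 + q) * Real.log (1 / (1 - q)))) < 1 ∧
    1 / (2 - q) * (1 - 1 / Real.exp 1) ≤
      min (1 / (2 - q))
        (1 + q - q * (1 - q) * (1 - 1 / Real.exp 1) / ((1 + q) * Real.log (1 / (1 - q)))) := by
  obtain ⟨hq1, hq2⟩ := hq
  have h2q : (0:ℝ) < 2 - q := by linarith
  have h1q : (0:ℝ) < 1 - q := by linarith
  have h1q' : (0:ℝ) < 1 + q := by linarith
  set c : ℝ := 1 - 1 / Real.exp 1 with hc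
  have hepos : (0:ℝ) < Real.exp 1 := Real.exp_pos 1
  have helt : Real.exp 1 < 2.7182818286 := Real.exp_one_lt_d9
  have hegt : (2.7182818283 : ℝ) < Real.exp 1 := Real.exp_one_gt_d9
  have hc0 : 0 < c := by
    have : 1 / Real.exp 1 < 1 := by
      rw [div_lt_one hepos]; linarith
    simp only [hc]; linarith
  have hc64 : c ≤ 0.64 := by
    have : (0.36 : ℝ) ≤ 1 / Real.exp 1 := by
      rw [le_div_iff₀ hepos]; nlinarith
    simp only [hc]; linarith
  set L : ℝ := Real.log (1 / (1 - q)) with hLdef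
  have hLeq : L = -Real.log (1 - q) := by
    rw [hLdef, one_div, Real.log_inv]
  have hqL : q ≤ L := by
    have := Real.log_le_sub_one_of_pos h1q
    rw [hLeq]; linarith
  have hL0 : 0 < L := lt_of_lt_of_le hq1 hqL
  clear_value c L
  -- key polynomial inequality
  have key : 1 / (2 - q) * c + (1 - q) * c / (1 + q) ≤ 1 + q := by
    rw [div_mul_eq_mul_div, div_add_div _ _ (ne_of_gt h2q) (ne_of_gt h1q'),
      div_le_iff₀ (by positivity)]
    have h3 : (0:ℝ) ≤ 3 - 2*q + q^2 := by nlinarith [sq_nonneg (1 - q)]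
    have e1 := mul_le_mul_of_nonneg_right hc64 h3
    have e2 : q^2 ≤ q := by nlinarith
    have e3 : q^3 ≤ q^2 := by nlinarith
    nlinarith [e1, e2, e3]
  -- bound on the fraction term
  have hfrac : q * (1 - q) * c / ((1 + q) * L) ≤ (1 - q) * c / (1 + q) := by
    have h1 : q * (1 - q) * c / ((1 + q) * L) ≤ q * (1 - q) * c / ((1 + q) * q) := by
      apply div_le_div_of_nonneg_left (by positivity) (by positivity)
      exact mul_le_mul_of_nonneg_left hqL h1q'.le
    have h2 : q * (1 - q) * c / ((1 + q) * q) = (1 - q) * c / (1 + q) := by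
      field_simp
    linarith [h1, h2 ▸ h1]
  constructor
  · apply lt_of_le_of_lt (min_le_left _ _)
    rw [div_lt_one h2q]; linarith
  · apply le_min
    · have h1e : 0 < 1 / Real.exp 1 := by positivity
      have : c ≤ 1 := by simp only [hc]; linarith
      nlinarith [one_div_pos.mpr h2q]
    · have : 1 / (2 - q) * c ≤ 1 + q - (1 - q) * c / (1 + q) := by linarith
      linarith
end

section
/- Let q ∈ (0,1), T ≥ 2, and let ζ ≥ 0 be a fixed real. Define J_{T+1} = 0 and recursively, for τ = T down to 2, suppose J_τ satisfies J_τ ≤ Σ_{t=τ}^T q(1-q)^{t-τ} ζ + Σ_{t=τ}^T q(1-q)^{t-τ} J_{t+1}. Then J_τ ≤ q(T+1-τ)ζ for all τ ∈ [2, T+1]. -/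
/-!
Write `m = T - τ` and `w j = q (1 - q) ^ j`. By downward induction, `J_{t+1} ≤ q (T - t) ζ`
for every `t ∈ [τ, T]`, so the recursion bounds `J_τ` by `ζ · ∑_{j ≤ m} w j (1 + q (m - j))`.
This sum equals `q (m + 1)` exactly: the expected number of arrivals among the remaining
`m + 1` periods, split according to the first arrival `j`.
-/

open Finset

theorem sum_range_succ_mul_geom_mul_one_add {R : Type*} [CommRing R] (q : R) (m : ℕ) :
    ∑ j ∈ range (m + 1), q * (1 - q) ^ j * (1 + q * ((m : R) - j)) = q * (m + 1) := by
  induction m with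
  | zero => simp
  | succ m ih =>
    have hgeom : ∑ j ∈ range (m + 1), q * (1 - q) ^ j = 1 - (1 - q) ^ (m + 1) := by
      rw [← geom_sum_mul_neg, ← mul_sum, sub_sub_cancel, mul_comm]
    have hsplit : ∀ j : ℕ, q * (1 - q) ^ j * (1 + q * (((m + 1 : ℕ) : R) - j))
        = q * (1 - q) ^ j * (1 + q * ((m : R) - j)) + q * (q * (1 - q) ^ j) := by
      intro j; push_cast; ring
    rw [sum_range_succ, sum_congr rfl fun j _ => hsplit j, sum_add_distrib, ih, ← mul_sum,
      hgeom]
    push_cast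
    ring

theorem sum_Icc_geom_add_le {q ζ : ℝ} (hq₀ : 0 ≤ q) (hq₁ : q ≤ 1) {J : ℕ → ℝ} {τ T : ℕ}
    (hτT : τ ≤ T) (hJ : ∀ t ∈ Icc τ T, J (t + 1) ≤ q * ((T - t : ℕ) : ℝ) * ζ) :
    (∑ t ∈ Icc τ T, q * (1 - q) ^ (t - τ) * ζ) + ∑ t ∈ Icc τ T, q * (1 - q) ^ (t - τ) * J (t + 1)
      ≤ q * ((T + 1 - τ : ℕ) : ℝ) * ζ := by
  have hterm : ∀ t ∈ Icc τ T, q * (1 - q) ^ (t - τ) * ζ + q * (1 - q) ^ (t - τ) * J (t + 1)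
      ≤ q * (1 - q) ^ (t - τ) * (1 + q * ((T - t : ℕ) : ℝ)) * ζ := fun t ht => by
    have hw : 0 ≤ q * (1 - q) ^ (t - τ) := mul_nonneg hq₀ (pow_nonneg (sub_nonneg.2 hq₁) _)
    nlinarith [mul_le_mul_of_nonneg_left (hJ t ht) hw]
  have hreindex : ∑ t ∈ Icc τ T, q * (1 - q) ^ (t - τ) * (1 + q * ((T - t : ℕ) : ℝ))
      = ∑ j ∈ range (T - τ + 1), q * (1 - q) ^ j * (1 + q * (((T - τ : ℕ) : ℝ) - j)) := by
    rw [← Ico_add_one_right_eq_Icc, sum_Ico_eq_sum_range, Nat.sub_add_comm hτT]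
    refine sum_congr rfl fun j hj => ?_
    rw [mem_range] at hj
    rw [Nat.add_sub_cancel_left, ← Nat.cast_sub (by omega), Nat.sub_add_eq]
  calc _ ≤ ∑ t ∈ Icc τ T, q * (1 - q) ^ (t - τ) * (1 + q * ((T - t : ℕ) : ℝ)) * ζ := by
        rw [← sum_add_distrib]; exact sum_le_sum hterm
    _ = q * ((T + 1 - τ : ℕ) : ℝ) * ζ := by
        rw [← sum_mul, hreindex, sum_range_succ_mul_geom_mul_one_add, Nat.sub_add_comm hτT]
        push_cast; rfl

theorem stmt_18_general (q : ℝ) (hq : q ∈ Set.Ioo (0:ℝ) 1) (T : ℕ)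
    (ζ : ℝ) (J : ℕ → ℝ) (hJT : J (T + 1) = 0)
    (hrec : ∀ τ, 2 ≤ τ → τ ≤ T →
      J τ ≤ (∑ t ∈ Finset.Icc τ T, q * (1 - q) ^ (t - τ) * ζ)
            + ∑ t ∈ Finset.Icc τ T, q * (1 - q) ^ (t - τ) * J (t + 1)) :
    ∀ τ, 2 ≤ τ → τ ≤ T + 1 → J τ ≤ q * ((T + 1 - τ : ℕ) : ℝ) * ζ := by
  intro τ hτ hτT
  induction hk : T + 1 - τ using Nat.strong_induction_on generalizing τ with
  | _ k ih =>
    subst hk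
    obtain rfl | hlt := hτT.eq_or_lt
    · simp [hJT]
    refine (hrec τ hτ (by omega)).trans
      (sum_Icc_geom_add_le hq.1.le hq.2.le (by omega) fun t ht => ?_)
    rw [mem_Icc] at ht
    simpa using ih _ (by omega) (t + 1) (by omega) (by omega) rfl

/-- Backward-induction value-to-go bound from the proof of Lemma 2: if
`J_{T+1} = 0` and for `τ ∈ [2, T]`,
`J_τ ≤ Σ_{t=τ}^T q(1-q)^{t-τ} ζ + Σ_{t=τ}^T q(1-q)^{t-τ} J_{t+1}`,
then `J_τ ≤ q (T+1-τ) ζ` for all `τ ∈ [2, T+1]`. -/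
theorem stmt_18 (q : ℝ) (hq : q ∈ Set.Ioo (0:ℝ) 1) (T : ℕ) (hT : 2 ≤ T)
    (ζ : ℝ) (hζ : 0 ≤ ζ) (J : ℕ → ℝ) (hJT : J (T + 1) = 0)
    (hrec : ∀ τ, 2 ≤ τ → τ ≤ T →
      J τ ≤ (∑ t ∈ Finset.Icc τ T, q * (1 - q) ^ (t - τ) * ζ)
            + ∑ t ∈ Finset.Icc τ T, q * (1 - q) ^ (t - τ) * J (t + 1)) :
    ∀ τ, 2 ≤ τ → τ ≤ T + 1 → J τ ≤ q * ((T + 1 - τ : ℕ) : ℝ) * ζ :=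
  stmt_18_general q hq T ζ J hJT hrec
end

section
/- In the two-period single-volunteer instance with geometric inter-activity times of parameter q ∈ (0,1), arrival rates λ_{1,1} = 1 and λ_{2,2} = q, and match probabilities p_{1,1} = ε and p_{1,2} = 1 with 0 < ε < q: the LP optimum equals ε + q, the policy of always notifying upon arrival completes ε + q² tasks in expectation, and the ratio (ε + q²)/(ε + q) tends to q as ε → 0⁺. -/
/-- Instance `I₄` (Proposition 5): with geometric inter-activity times of parameter
`q ∈ (0,1)`, arrivals `λ_{1,1} = 1`, `λ_{2,2} = q`, and match probabilities
`p_{1,1} = ε`, `p_{1,2} = 1` with `0 < ε < q`: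
(i) the feasible point `x₁ = x₂ = 1` is optimal for the LP, whose optimum is `ε + q`;
(ii) always notifying upon arrival completes `ε + q²` tasks in expectation;
(iii) the ratio `(ε + q²)/(ε + q)` tends to `q` as `ε → 0⁺`. -/
theorem stmt_19 (q : ℝ) (hq : q ∈ Set.Ioo (0:ℝ) 1) :
    (∀ ε : ℝ, 0 < ε → ε < q →
      (∀ x₁ x₂ : ℝ, x₁ ∈ Set.Icc (0:ℝ) 1 → x₂ ∈ Set.Icc (0:ℝ) 1 →
        x₁ * (1 - q) + q * x₂ ≤ 1 → x₁ * ε + q * x₂ * 1 ≤ ε + q) ∧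
      ((1:ℝ) * (1 - q) + q * 1 ≤ 1 ∧ (1:ℝ) * ε + q * 1 * 1 = ε + q) ∧
      (1:ℝ) * ε + q * (q * 1) = ε + q ^ 2) ∧
    Filter.Tendsto (fun ε : ℝ => (ε + q ^ 2) / (ε + q))
      (nhdsWithin 0 (Set.Ioi 0)) (nhds q) := by
  obtain ⟨hq0, hq1⟩ := hq
  constructor
  · intro ε hε hεq
    refine ⟨?_, ⟨by ring_nf; nlinarith, by ring⟩, by ring⟩
    intro x₁ x₂ ⟨h1, h2⟩ ⟨h3, h4⟩ hc
    nlinarith [mul_nonneg hq0.le (sub_nonneg.2 h4)]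
  · have h : Filter.Tendsto (fun ε : ℝ => (ε + q ^ 2) / (ε + q)) (nhds 0) (nhds q) := by
      have : ((0:ℝ) + q ^ 2) / (0 + q) = q := by
        field_simp; ring
      rw [← this]
      have hc : ContinuousAt (fun ε : ℝ => (ε + q ^ 2) / (ε + q)) 0 :=
        ContinuousAt.div (by fun_prop) (by fun_prop) (by simp [hq0.ne'])
      simpa [pow_two, mul_div_assoc, div_self hq0.ne'] using hc.tendsto
    exact h.mono_left nhdsWithin_le_nhds
end
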